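/- arXiv:2602.00183 — 3 statements merged into one kernel-verified Lean document; each statement's English description precedes it below -/
import Mathlib

section
/- Let s₀, s₁, …, s_n be independent, identically distributed real-valued random variables whose common distribution is atomless. Let α ∈ (0,1), set k = ⌈α(n+1)⌉, assume 1 ≤ k ≤ n, and let q̂ be the k-th smallest value among s₁, …, s_n. Then the false positive rate satisfies ℙ(s₀ ≤ q̂) = ⌈α(n+1)⌉/(n+1) ≤ α + 1/(n+1). -/
/-!
The event `t 0 ≤ q̂` says exactly that fewer than `k` of the scores `t 0, …, t n` lie strictly
below `t 0`, i.e. that the rank of `t 0` in the full sample is `< k`. Independence and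
atomlessness rule out ties almost surely, so almost surely exactly `k` of the `n + 1` scores have
rank `< k`; by exchangeability each score has the same chance of doing so, which is therefore
`k / (n + 1)`.
-/

open MeasureTheory ProbabilityTheory

/-- The `k`-th smallest value among `s 0, …, s (n-1)` (the `k`-th order statistic of `s`),
defined as `inf {q : #{i : s i ≤ q} ≥ k}`. -/
noncomputable def orderStat {n : ℕ} (s : Fin n → ℝ) (k : ℕ) : ℝ :=
  sInf {q : ℝ | k ≤ (Finset.univ.filter fun i => s i ≤ q).card}

open Finset ENNReal

section Rank

variable {ι α : Type*} [Fintype ι] [LinearOrder α]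

def rank (x : ι → α) (j : ι) : ℕ := #{i | x i < x j}

lemma rank_comp_perm (x : ι → α) (σ : Equiv.Perm ι) (j : ι) :
    rank (x ∘ σ) j = rank x (σ j) :=
  card_equiv σ (by simp)

lemma rank_lt_card (x : ι → α) (j : ι) : rank x j < Fintype.card ι :=
  card_lt_univ_of_notMem (x := j) (by simp)

lemma rank_lt_rank {x : ι → α} {j j' : ι} (h : x j < x j') : rank x j < rank x j' :=
  card_lt_card <| (ssubset_iff_of_subset fun i hi => by simp_all [lt_trans _ h]).2
    ⟨j, by simpa using h, by simp⟩

lemma rank_injective {x : ι → α} (hx : Function.Injective x) : Function.Injective (rank x) := by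
  intro j j' h
  rcases lt_trichotomy (x j) (x j') with hlt | heq | hgt
  · exact absurd h (rank_lt_rank hlt).ne
  · exact hx heq
  · exact absurd h (rank_lt_rank hgt).ne'

lemma card_rank_lt {x : ι → α} (hx : Function.Injective x) {k : ℕ}
    (hk : k ≤ Fintype.card ι) : #{j | rank x j < k} = k := by
  let r : ι → Fin (Fintype.card ι) := fun j => ⟨rank x j, rank_lt_card x j⟩
  have hr : Function.Bijective r := (Fintype.bijective_iff_injective_and_card r).2
    ⟨fun j j' h => rank_injective hx (Fin.val_eq_of_eq h), by simp⟩
  rw [card_equiv (Equiv.ofBijective r hr)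
      (t := univ.filter fun m : Fin (Fintype.card ι) => (m : ℕ) < k) (by simp [r]),
    Fin.card_filter_val_lt, min_eq_right hk]

end Rank

lemma le_orderStat_iff {n k : ℕ} (hk1 : 1 ≤ k) (hkn : k ≤ n) (s : Fin n → ℝ) (r : ℝ) :
    r ≤ orderStat s k ↔ #{i | s i < r} < k := by
  obtain ⟨b, hb⟩ := (Set.finite_range s).bddBelow
  obtain ⟨c, hc⟩ := (Set.finite_range s).bddAbove
  have hc_mem : c ∈ {q : ℝ | k ≤ #{i | s i ≤ q}} := by
    simpa [filter_true_of_mem fun i _ => hc ⟨i, rfl⟩] using hkn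
  have hbdd : BddBelow {q : ℝ | k ≤ #{i | s i ≤ q}} := by
    refine ⟨b, fun q hq => ?_⟩
    obtain ⟨i, hi⟩ := card_pos.1 (hk1.trans hq)
    exact (hb ⟨i, rfl⟩).trans (mem_filter.1 hi).2
  constructor
  · intro hr
    by_contra! h
    obtain ⟨i₀, hi₀, hmax⟩ := exists_max_image {i | s i < r} s (card_pos.1 (hk1.trans h))
    have hmem : s i₀ ∈ {q : ℝ | k ≤ #{i | s i ≤ q}} :=
      h.trans (card_le_card fun i hi => mem_filter.2 ⟨mem_univ i, hmax i hi⟩)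
    exact (hr.trans (csInf_le hbdd hmem)).not_gt (mem_filter.1 hi₀).2
  · intro h
    refine le_csInf ⟨c, hc_mem⟩ fun q hq => ?_
    by_contra! hqr
    have hsub : univ.filter (fun i => s i ≤ q) ⊆ univ.filter fun i => s i < r := fun i hi =>
      mem_filter.2 ⟨mem_univ i, (mem_filter.1 hi).2.trans_lt hqr⟩
    exact (hq.trans (card_le_card hsub)).not_gt h

lemma le_orderStat_succ_iff_rank_lt {n k : ℕ} (hk1 : 1 ≤ k) (hkn : k ≤ n)
    (x : Fin (n + 1) → ℝ) : x 0 ≤ orderStat (fun i => x i.succ) k ↔ rank x 0 < k := by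
  rw [le_orderStat_iff hk1 hkn, rank, Fin.card_filter_univ_succ, if_neg (lt_irrefl _)]

namespace ProbabilityTheory

variable {Ω ι : Type*} [MeasurableSpace Ω] {μ : Measure Ω}

lemma IndepFun.measure_eq_eq_zero [IsFiniteMeasure μ] {β : Type*} [MeasurableSpace β]
    [MeasurableEq β] {X Y : Ω → β} (hX : Measurable X) (hY : Measurable Y)
    (hXY : IndepFun X Y μ) [NullSingletonClass (μ.map X)] :
    μ {ω | X ω = Y ω} = 0 := by
  change μ ((fun ω => (X ω, Y ω)) ⁻¹' Set.diagonal β) = 0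
  rw [← Measure.map_apply (hX.prodMk hY) measurableSet_diagonal,
    hXY.map_prod_eq_prod_map_map hX.aemeasurable hY.aemeasurable,
    Measure.prod_apply_symm measurableSet_diagonal]
  simp [Set.preimage, Set.diagonal]

lemma iIndepFun.ae_injective [Countable ι] [IsFiniteMeasure μ] {β : Type*} [MeasurableSpace β]
    [MeasurableEq β] {t : ι → Ω → β} (hmeas : ∀ i, Measurable (t i))
    (hindep : iIndepFun t μ) (hatom : ∀ i, NullSingletonClass (μ.map (t i))) :
    ∀ᵐ ω ∂μ, Function.Injective fun i => t i ω := by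
  simp only [Function.Injective, ae_all_iff]
  intro i j
  by_cases hij : i = j
  · exact .of_forall fun _ _ => hij
  · have := IndepFun.measure_eq_eq_zero (hmeas i) (hmeas j) (hindep.indepFun hij)
    filter_upwards [measure_eq_zero_iff_ae_notMem.1 this] with ω hω h
    exact absurd h hω

lemma iIndepFun.identDistrib_comp_perm [Fintype ι] {β : Type*} [MeasurableSpace β]
    {t : ι → Ω → β} (hmeas : ∀ i, Measurable (t i)) (hindep : iIndepFun t μ) {i₀ : ι}
    (hident : ∀ i, IdentDistrib (t i) (t i₀) μ μ) (σ : Equiv.Perm ι) :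
    IdentDistrib (fun ω => (fun i => t i ω) ∘ σ) (fun ω i => t i ω) μ μ where
  aemeasurable_fst := (measurable_pi_lambda _ fun i => hmeas (σ i)).aemeasurable
  aemeasurable_snd := (measurable_pi_lambda _ hmeas).aemeasurable
  map_eq := by
    change μ.map (fun ω i => t (σ i) ω) = _
    rw [(hindep.precomp σ.injective).map_fun_eq_pi_map fun i => (hmeas _).aemeasurable,
      hindep.map_fun_eq_pi_map fun i => (hmeas i).aemeasurable]
    congr 1 with i : 1
    exact (hident (σ i)).map_eq.trans (hident i).map_eq.symm

end ProbabilityTheory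

section Exchangeable

variable {Ω ι α : Type*} [MeasurableSpace Ω] {μ : Measure Ω} [Fintype ι] [LinearOrder α]
  [TopologicalSpace α] [OrderClosedTopology α] [SecondCountableTopology α] [MeasurableSpace α]
  [OpensMeasurableSpace α]

lemma measurable_rank (j : ι) : Measurable fun x : ι → α => rank x j := by
  simp only [rank, card_filter]
  exact Finset.measurable_sum _ fun i _ => Measurable.ite
    (measurableSet_lt (measurable_pi_apply i) (measurable_pi_apply j)) measurable_const
    measurable_const

lemma measurableSet_rank_lt (j : ι) (k : ℕ) : MeasurableSet {x : ι → α | rank x j < k} :=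
  measurable_rank j measurableSet_Iio

lemma sum_measure_rank_lt [IsProbabilityMeasure μ] {X : Ω → ι → α} (hX : Measurable X)
    (hinj : ∀ᵐ ω ∂μ, Function.Injective (X ω)) {k : ℕ} (hk : k ≤ Fintype.card ι) :
    ∑ j, μ {ω | rank (X ω) j < k} = k := by
  have hE : ∀ j, MeasurableSet {ω | rank (X ω) j < k} := fun j =>
    hX (measurableSet_rank_lt j k)
  calc ∑ j, μ {ω | rank (X ω) j < k}
      = ∑ j, ∫⁻ ω, {ω | rank (X ω) j < k}.indicator 1 ω ∂μ := by
        simp only [lintegral_indicator_one (hE _)]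
    _ = ∫⁻ ω, ∑ j, {ω | rank (X ω) j < k}.indicator 1 ω ∂μ :=
        (lintegral_finsetSum _ fun j _ => measurable_one.indicator (hE j)).symm
    _ = ∫⁻ _, (k : ℝ≥0∞) ∂μ := by
        refine lintegral_congr_ae (hinj.mono fun ω hω => ?_)
        simp only [Set.indicator_apply, Set.mem_ofPred_eq, Pi.one_apply, sum_boole,
          card_rank_lt hω hk]
    _ = k := by simp

lemma measure_rank_lt_eq_div [IsProbabilityMeasure μ] {X : Ω → ι → α} (hX : Measurable X)
    (hexch : ∀ σ : Equiv.Perm ι, IdentDistrib (fun ω => X ω ∘ σ) X μ μ)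
    (hinj : ∀ᵐ ω ∂μ, Function.Injective (X ω)) {k : ℕ} (hk : k ≤ Fintype.card ι)
    (j : ι) : μ {ω | rank (X ω) j < k} = k / Fintype.card ι := by
  classical
  have hsym : ∀ j', μ {ω | rank (X ω) j' < k} = μ {ω | rank (X ω) j < k} := fun j' => by
    have := (hexch (Equiv.swap j' j)).measure_mem_eq (measurableSet_rank_lt j' k)
    simpa only [Set.preimage_ofPred_eq, rank_comp_perm, Equiv.swap_apply_left] using this.symm
  have hsum := sum_measure_rank_lt hX hinj hk
  simp only [hsym, sum_const, card_univ, nsmul_eq_mul] at hsum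
  rw [ENNReal.eq_div_iff (by simp [Fintype.card_pos_iff.2 ⟨j⟩ |>.ne']) (by simp), hsum]

end Exchangeable

theorem conformal_fpr_bound_general {Ω : Type*} [MeasurableSpace Ω]
    (μ : Measure Ω) [IsProbabilityMeasure μ]
    (n : ℕ) (t : Fin (n + 1) → Ω → ℝ)
    (hmeas : ∀ i, Measurable (t i))
    (hindep : iIndepFun t μ)
    (hident : ∀ i, IdentDistrib (t i) (t 0) μ μ)
    (hatomless : ∀ r : ℝ, (μ.map (t 0)) {r} = 0)
    (α : ℝ)
    (k : ℕ) (hk : (k : ℤ) = ⌈α * ((n : ℝ) + 1)⌉) (hk1 : 1 ≤ k) (hkn : k ≤ n) :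
    (μ {ω | t 0 ω ≤ orderStat (fun i : Fin n => t i.succ ω) k}).toReal
        = (k : ℝ) / ((n : ℝ) + 1) ∧
    (k : ℝ) / ((n : ℝ) + 1) ≤ α + 1 / ((n : ℝ) + 1) := by
  have hatom : ∀ i, NullSingletonClass (μ.map (t i)) := fun i =>
    ⟨by rw [(hident i).map_eq]; exact hatomless⟩
  have hevent : {ω | t 0 ω ≤ orderStat (fun i : Fin n => t i.succ ω) k} =
      {ω | rank (fun i => t i ω) 0 < k} :=
    Set.ext fun ω => le_orderStat_succ_iff_rank_lt hk1 hkn fun i => t i ω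
  have hfpr :
      μ {ω | t 0 ω ≤ orderStat (fun i : Fin n => t i.succ ω) k} = k / (n + 1 : ℕ) := by
    rw [hevent, measure_rank_lt_eq_div (measurable_pi_lambda _ hmeas)
      (hindep.identDistrib_comp_perm hmeas hident) (hindep.ae_injective hmeas hatom)
      (by simpa using hkn.trans n.le_succ), Fintype.card_fin]
  have hceil : (k : ℝ) < α * (n + 1) + 1 := by
    exact_mod_cast hk ▸ Int.ceil_lt_add_one (α * ((n : ℝ) + 1))
  refine ⟨by rw [hfpr, toReal_div, toReal_natCast, toReal_natCast, Nat.cast_succ], ?_⟩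
  rw [div_le_iff₀ (by positivity), add_mul, one_div_mul_cancel (by positivity)]
  exact hceil.le

/-- **Theorem 5.4 (false positive rate bound).**
For i.i.d. scores `t 0, …, t n` with atomless common law, with `k = ⌈α(n+1)⌉`,
`1 ≤ k ≤ n`, and `q̂` the `k`-th smallest calibration score among `t 1, …, t n`,
the false positive rate satisfies
`ℙ(t 0 ≤ q̂) = ⌈α(n+1)⌉/(n+1) ≤ α + 1/(n+1)`. -/
theorem conformal_fpr_bound {Ω : Type*} [MeasurableSpace Ω]
    (μ : Measure Ω) [IsProbabilityMeasure μ]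
    (n : ℕ) (t : Fin (n + 1) → Ω → ℝ)
    (hmeas : ∀ i, Measurable (t i))
    (hindep : iIndepFun t μ)
    (hident : ∀ i, IdentDistrib (t i) (t 0) μ μ)
    (hatomless : ∀ r : ℝ, (μ.map (t 0)) {r} = 0)
    (α : ℝ) (hα : α ∈ Set.Ioo (0 : ℝ) 1)
    (k : ℕ) (hk : (k : ℤ) = ⌈α * ((n : ℝ) + 1)⌉) (hk1 : 1 ≤ k) (hkn : k ≤ n) :
    (μ {ω | t 0 ω ≤ orderStat (fun i : Fin n => t i.succ ω) k}).toReal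
        = (k : ℝ) / ((n : ℝ) + 1) ∧
    (k : ℝ) / ((n : ℝ) + 1) ≤ α + 1 / ((n : ℝ) + 1) :=
  conformal_fpr_bound_general μ n t hmeas hindep hident hatomless α k hk hk1 hkn
end

section
/- Let σ > 0, let x, δ ∈ ℝ^d with δ ≠ 0, and let p̄ ∈ (0,1). Define the half-space A = {z ∈ ℝ^d : ⟨δ, z − x⟩ ≥ σ‖δ‖₂·Φ⁻¹(1 − p̄)}. If ε is a random vector with law ν_{0,σ}, then ℙ(x + δ + ε ∈ A) = Φ(Φ⁻¹(p̄) + ‖δ‖₂/σ). -/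
/-!
Write `ε = σ • g` with `g` standard Gaussian. The law of a linear form `⟪u, ·⟫` under the
standard Gaussian is `N(0, ‖u‖²)`, so `⟪δ, ε⟫ ~ N(0, (σ‖δ‖)²)`. Since `⟪δ, x + δ + ε - x⟫ =
‖δ‖² + ⟪δ, ε⟫`, the event is the Gaussian tail `⟪δ, ε⟫ ≥ σ‖δ‖ Φ⁻¹(1 - p̄) - ‖δ‖²`, of probability
`Φ(‖δ‖/σ - Φ⁻¹(1 - p̄))` by symmetry of `N(0, 1)`. Finally `Φ⁻¹(1 - p̄) = -Φ⁻¹(p̄)`, because `Φ`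
is a strictly increasing bijection of `ℝ` onto `(0, 1)` with `Φ(-t) = 1 - Φ(t)`.
-/

open MeasureTheory ProbabilityTheory

/-- Standard normal CDF. -/
noncomputable def Phi (t : ℝ) : ℝ := ((gaussianReal 0 1) (Set.Iic t)).toReal

/-- Inverse of the standard normal CDF on `(0,1)`. -/
noncomputable def PhiInv : ℝ → ℝ := Function.invFun Phi

/-- Gaussian measure on `ℝ^d` with mean `m` and covariance `σ² I`
(product of `d` one-dimensional Gaussians). -/
noncomputable def gaussianVec {d : ℕ} (m : EuclideanSpace ℝ (Fin d)) (σ : ℝ) :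
    Measure (EuclideanSpace ℝ (Fin d)) :=
  (Measure.pi fun i => gaussianReal (m i) ((σ ^ 2).toNNReal)).map
    (MeasurableEquiv.toLp 2 (Fin d → ℝ))

open Set Filter

lemma Phi_eq_cdf : Phi = cdf (gaussianReal 0 1) := by
  ext t
  rw [cdf_eq_real]
  rfl

lemma Phi_sub_Phi_eq_integral (s t : ℝ) :
    Phi t - Phi s = ∫ x in s..t, gaussianPDFReal 0 1 x := by
  simp only [Phi, gaussianReal_apply_eq_integral 0 one_ne_zero,
    ENNReal.toReal_ofReal (integral_nonneg fun x => gaussianPDFReal_nonneg 0 1 x)]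
  exact intervalIntegral.integral_Iic_sub_Iic (integrable_gaussianPDFReal 0 1).integrableOn
    (integrable_gaussianPDFReal 0 1).integrableOn

lemma continuous_Phi : Continuous Phi := by
  have h : Phi = fun t => Phi 0 + ∫ x in (0 : ℝ)..t, gaussianPDFReal 0 1 x := by
    ext t
    rw [← Phi_sub_Phi_eq_integral]
    ring
  rw [h]
  exact continuous_const.add ((integrable_gaussianPDFReal 0 1).continuous_primitive 0)

lemma strictMono_Phi : StrictMono Phi := fun s t hst => by
  have hpos : 0 < ∫ x in s..t, gaussianPDFReal 0 1 x :=
    intervalIntegral.intervalIntegral_pos_of_pos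
      (integrable_gaussianPDFReal 0 1).intervalIntegrable
      (fun x => gaussianPDFReal_pos 0 1 x one_ne_zero) hst
  linarith [Phi_sub_Phi_eq_integral s t]

lemma Ioo_subset_range_Phi : Ioo 0 1 ⊆ range Phi := fun p hp => by
  obtain ⟨a, ha⟩ :=
    ((Phi_eq_cdf ▸ tendsto_cdf_atBot _).eventually (eventually_lt_nhds hp.1)).exists
  obtain ⟨b, hb⟩ :=
    ((Phi_eq_cdf ▸ tendsto_cdf_atTop _).eventually (eventually_gt_nhds hp.2)).exists
  exact intermediate_value_univ a b continuous_Phi ⟨ha.le, hb.le⟩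

lemma Phi_PhiInv {p : ℝ} (hp : p ∈ Ioo 0 1) : Phi (PhiInv p) = p :=
  Function.invFun_eq (Ioo_subset_range_Phi hp)

lemma gaussianReal_zero_one_real_Ici (a : ℝ) : (gaussianReal 0 1).real (Ici a) = Phi (-a) := by
  have hsymm := gaussianReal_map_neg (μ := 0) (v := 1)
  rw [neg_zero] at hsymm
  rw [Phi, ← measureReal_def, ← hsymm, map_measureReal_apply measurable_neg measurableSet_Iic]
  congr 1
  ext x
  simp

lemma Phi_neg (a : ℝ) : Phi (-a) = 1 - Phi a := by
  rw [← gaussianReal_zero_one_real_Ici, Phi, ← measureReal_def,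
    ← probReal_compl_eq_one_sub measurableSet_Iic, compl_Iic]
  have := nullSingletonClass_gaussianReal (μ := 0) one_ne_zero
  exact measureReal_congr Ioi_ae_eq_Ici.symm

lemma PhiInv_one_sub {p : ℝ} (hp : p ∈ Ioo 0 1) : PhiInv (1 - p) = -PhiInv p := by
  have hp' : 1 - p ∈ Ioo 0 1 := ⟨by linarith [hp.2], by linarith [hp.1]⟩
  apply strictMono_Phi.injective
  rw [Phi_PhiInv hp', Phi_neg, Phi_PhiInv hp]

lemma gaussianReal_zero_sq_real_Ici {s : ℝ} (hs : 0 < s) (c : ℝ) :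
    (gaussianReal 0 (s ^ 2).toNNReal).real (Ici c) = Phi (-(c / s)) := by
  have hscale := gaussianReal_map_const_mul (μ := 0) (v := 1) s
  rw [mul_zero, mul_one, ← Real.toNNReal_of_nonneg] at hscale
  rw [← hscale, map_measureReal_apply (measurable_const_mul s) measurableSet_Ici,
    ← gaussianReal_zero_one_real_Ici]
  congr 1
  ext y
  simp [div_le_iff₀' hs]

lemma stdGaussian_map_innerSL {E : Type*} [NormedAddCommGroup E] [InnerProductSpace ℝ E]
    [FiniteDimensional ℝ E] [MeasurableSpace E] [BorelSpace E] (u : E) :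
    (stdGaussian E).map (innerSL ℝ u) = gaussianReal 0 (‖u‖ ^ 2).toNNReal := by
  rw [IsGaussian.map_eq_gaussianReal, integral_strongDual_stdGaussian, variance_dual_stdGaussian,
    innerSL_apply_norm]

lemma gaussianVec_zero_eq_map_smul_stdGaussian (d : ℕ) (σ : ℝ) :
    gaussianVec (0 : EuclideanSpace ℝ (Fin d)) σ
      = (stdGaussian (EuclideanSpace ℝ (Fin d))).map (σ • ·) := by
  have hscale := gaussianReal_map_const_mul (μ := 0) (v := 1) σ
  rw [mul_zero, mul_one, ← Real.toNNReal_of_nonneg] at hscale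
  rw [gaussianVec, ← map_pi_eq_stdGaussian, Measure.map_map (by fun_prop) (by fun_prop)]
  simp only [PiLp.zero_apply, ← hscale]
  rw [← Measure.pi_map_pi (fun _ => (measurable_const_mul σ).aemeasurable),
    Measure.map_map (by fun_prop) (by fun_prop)]
  rfl

lemma gaussianVec_zero_map_inner (d : ℕ) (σ : ℝ) (δ : EuclideanSpace ℝ (Fin d)) :
    (gaussianVec 0 σ).map (inner ℝ δ) = gaussianReal 0 (‖σ • δ‖ ^ 2).toNNReal := by
  rw [gaussianVec_zero_eq_map_smul_stdGaussian, Measure.map_map (by fun_prop) (by fun_prop),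
    ← stdGaussian_map_innerSL]
  congr 1
  ext z
  simp [inner_smul_right]

/-- **Lemma A.2, second identity (Eq. (18)).** For the half-space
`A = {z : ⟨δ, z - x⟩ ≥ σ‖δ‖ Φ⁻¹(1 - p̄)}` and `ε ~ ν_{0,σ}`, one has
`ℙ(x + δ + ε ∈ A) = Φ(Φ⁻¹(p̄) + ‖δ‖/σ)`. -/
theorem halfspace_prob_shifted {d : ℕ} (σ : ℝ) (hσ : 0 < σ)
    (x δ : EuclideanSpace ℝ (Fin d)) (hδ : δ ≠ 0)
    (pbar : ℝ) (hpbar : pbar ∈ Set.Ioo (0 : ℝ) 1)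
    (A : Set (EuclideanSpace ℝ (Fin d)))
    (hA : A = {z | σ * ‖δ‖ * PhiInv (1 - pbar) ≤ (inner ℝ δ (z - x) : ℝ)}) :
    ((gaussianVec (0 : EuclideanSpace ℝ (Fin d)) σ) {ε | x + δ + ε ∈ A}).toReal
      = Phi (PhiInv pbar + ‖δ‖ / σ) := by
  have hσδ : 0 < ‖σ • δ‖ := norm_pos_iff.2 (smul_ne_zero hσ.ne' hδ)
  have hevent : {ε | x + δ + ε ∈ A}
      = inner ℝ δ ⁻¹' Ici (σ * ‖δ‖ * PhiInv (1 - pbar) - ‖δ‖ ^ 2) := by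
    ext ε
    have hshift : inner ℝ δ (x + δ + ε - x) = ‖δ‖ ^ 2 + inner ℝ δ ε := by
      rw [add_assoc, add_sub_cancel_left, inner_add_right, real_inner_self_eq_norm_sq]
    simp only [hA, mem_ofPred_eq, mem_preimage, mem_Ici, hshift, sub_le_iff_le_add']
  rw [hevent, ← measureReal_def, ← map_measureReal_apply (by fun_prop) measurableSet_Ici,
    gaussianVec_zero_map_inner, gaussianReal_zero_sq_real_Ici hσδ, PhiInv_one_sub hpbar,
    norm_smul, Real.norm_of_nonneg hσ.le]
  congr 1
  field_simp
  ring
end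

section
/- Let σ > 0, let x, δ ∈ ℝ^d with δ ≠ 0, and let β ∈ ℝ. Let S = {z ∈ ℝ^d : ⟨δ, z⟩ ≤ β}, and let h : ℝ^d → [0,1] be any measurable function (representing the acceptance probability of a possibly randomized binary decision rule). If ∫ h dν_{x,σ} ≥ ν_{x,σ}(S), then ∫ h dν_{x+δ,σ} ≥ ν_{x+δ,σ}(S). -/
open MeasureTheory ProbabilityTheory

/-!
The likelihood ratio of `ν_{x+δ,σ}` with respect to `ν_{x,σ}` is
`r z = exp ((⟪δ, z - x⟫ - ‖δ‖² / 2) / σ²)`, an increasing function of `⟪δ, z⟫`, so the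
half-space is a sublevel set `S = {r ≤ c}` with `c > 0`. Then `(r - c) (h - 1_S) ≥ 0` pointwise,
and integrating against `ν_{x,σ}` gives
`∫ h dν_{x+δ,σ} - ν_{x+δ,σ}(S) ≥ c (∫ h dν_{x,σ} - ν_{x,σ}(S)) ≥ 0`.
-/

open Real Set
open scoped NNReal ENNReal InnerProductSpace

theorem lintegral_pi_prod_eq_prod {ι : Type*} [Fintype ι] {Ω : ι → Type*}
    [∀ i, MeasurableSpace (Ω i)] (μ : ∀ i, Measure (Ω i)) [∀ i, IsProbabilityMeasure (μ i)]
    {g : ∀ i, Ω i → ℝ≥0∞} (hg : ∀ i, Measurable (g i)) :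
    ∫⁻ ω, ∏ i, g i (ω i) ∂Measure.pi μ = ∏ i, ∫⁻ t, g i t ∂μ i := by
  rw [lintegral_prod_eq_prod_lintegral_of_indepFun _ _ (iIndepFun_pi fun i => (hg i).aemeasurable)
    fun i => (hg i).comp (measurable_pi_apply i)]
  exact Finset.prod_congr rfl fun i _ => (measurePreserving_eval μ i).lintegral_comp (hg i)

theorem MeasureTheory.Measure.pi_withDensity {ι : Type*} [Fintype ι] {Ω : ι → Type*}
    [∀ i, MeasurableSpace (Ω i)] (μ : ∀ i, Measure (Ω i)) [∀ i, IsProbabilityMeasure (μ i)]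
    {f : ∀ i, Ω i → ℝ≥0∞} (hf : ∀ i, Measurable (f i))
    [∀ i, SigmaFinite ((μ i).withDensity (f i))] :
    Measure.pi (fun i => (μ i).withDensity (f i))
      = (Measure.pi μ).withDensity fun ω => ∏ i, f i (ω i) := by
  refine Measure.pi_eq fun s hs => ?_
  have hind : (univ.pi s).indicator (fun ω => ∏ i, f i (ω i))
      = fun ω => ∏ i, (s i).indicator (f i) (ω i) := by
    ext ω
    by_cases hω : ω ∈ univ.pi s
    · simp_all [indicator_of_mem]
    · obtain ⟨i, -, hi⟩ := not_forall₂.1 hω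
      rw [indicator_of_notMem hω,
        Finset.prod_eq_zero (Finset.mem_univ i) (indicator_of_notMem hi _)]
  rw [withDensity_apply _ (.univ_pi hs), ← lintegral_indicator (.univ_pi hs), hind,
    lintegral_pi_prod_eq_prod μ fun i => (hf i).indicator (hs i)]
  simp_rw [withDensity_apply _ (hs _), lintegral_indicator (hs _)]

theorem MeasurableEquiv.map_withDensity {α β : Type*} [MeasurableSpace α] [MeasurableSpace β]
    (e : α ≃ᵐ β) (μ : Measure α) (f : α → ℝ≥0∞) :
    (μ.withDensity f).map e = (μ.map e).withDensity (f ∘ e.symm) := by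
  ext s hs
  rw [e.map_apply, withDensity_apply _ (e.measurable hs), withDensity_apply _ hs, e.restrict_map,
    lintegral_map_equiv]
  simp

theorem integrable_of_withDensity_ofReal {α : Type*} [MeasurableSpace α] {μ : Measure α}
    {r : α → ℝ} (hr : Measurable r) (hr0 : ∀ z, 0 ≤ r z)
    [IsFiniteMeasure (μ.withDensity fun z => ENNReal.ofReal (r z))] : Integrable r μ := by
  have hfin := measure_ne_top (μ.withDensity fun z => ENNReal.ofReal (r z)) univ
  rw [withDensity_apply _ .univ, setLIntegral_univ] at hfin
  refine (integrable_toReal_of_lintegral_ne_top (by fun_prop) hfin).congr (.of_forall fun z => ?_)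
  exact ENNReal.toReal_ofReal (hr0 z)

theorem integral_withDensity_ofReal {α : Type*} [MeasurableSpace α] {μ : Measure α}
    {r : α → ℝ} (hr : Measurable r) (hr0 : ∀ z, 0 ≤ r z) (g : α → ℝ) :
    ∫ z, g z ∂μ.withDensity (fun z => ENNReal.ofReal (r z)) = ∫ z, r z * g z ∂μ := by
  rw [integral_withDensity_eq_integral_toReal_smul (by fun_prop) (.of_forall fun _ => by simp)]
  simp_rw [ENNReal.toReal_ofReal (hr0 _), smul_eq_mul]

theorem measureReal_sublevel_le_integral_of_likelihoodRatio {α : Type*} [MeasurableSpace α]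
    {μ ν : Measure α} [IsFiniteMeasure μ] [IsFiniteMeasure ν] {r : α → ℝ}
    (hr : Measurable r) (hr0 : ∀ z, 0 ≤ r z) (hν : ν = μ.withDensity fun z => ENNReal.ofReal (r z))
    {c : ℝ} (hc : 0 ≤ c) {h : α → ℝ} (hh : Measurable h) (h01 : ∀ z, h z ∈ Icc (0 : ℝ) 1)
    (hμ : μ.real {z | r z ≤ c} ≤ ∫ z, h z ∂μ) :
    ν.real {z | r z ≤ c} ≤ ∫ z, h z ∂ν := by
  set S := {z | r z ≤ c}
  have hS : MeasurableSet S := measurableSet_le hr measurable_const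
  subst hν
  have hri : Integrable r μ := integrable_of_withDensity_ofReal hr hr0
  have hh_bound : ∀ z, ‖h z‖ ≤ 1 := fun z => by
    simpa [abs_of_nonneg (h01 z).1] using (h01 z).2
  have h1S_bound : ∀ z, ‖S.indicator (1 : α → ℝ) z‖ ≤ 1 := fun z =>
    (norm_indicator_le_norm_self (f := 1) z).trans_eq norm_one
  have hh_int : Integrable h μ := .of_bound (by fun_prop) 1 (.of_forall hh_bound)
  have h1S_int : Integrable (S.indicator (1 : α → ℝ)) μ := (integrable_const 1).indicator hS
  have hrh : Integrable (fun z => r z * h z) μ := hri.mul_bdd (by fun_prop) (.of_forall hh_bound)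
  have hr1S : Integrable (fun z => r z * S.indicator 1 z) μ :=
    hri.mul_bdd (by fun_prop) (.of_forall h1S_bound)
  have hpointwise : ∀ z, c * (h z - S.indicator 1 z) ≤ r z * h z - r z * S.indicator 1 z := by
    intro z
    by_cases hz : z ∈ S
    · simp only [indicator_of_mem hz, Pi.one_apply, mul_one]
      nlinarith [show r z ≤ c from hz, (h01 z).2]
    · simp only [indicator_of_notMem hz, sub_zero, mul_zero]
      exact mul_le_mul_of_nonneg_right (not_le.1 hz).le (h01 z).1
  have hmono :
      c * (∫ z, h z ∂μ - μ.real S) ≤ ∫ z, r z * h z ∂μ - ∫ z, r z * S.indicator 1 z ∂μ := by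
    rw [← integral_indicator_one hS, ← integral_sub hh_int h1S_int, ← integral_const_mul,
      ← integral_sub hrh hr1S]
    exact integral_mono ((hh_int.sub h1S_int).const_mul c) (hrh.sub hr1S) hpointwise
  rw [← integral_indicator_one hS, integral_withDensity_ofReal hr hr0,
    integral_withDensity_ofReal hr hr0]
  nlinarith [mul_nonneg hc (sub_nonneg.2 hμ)]

theorem gaussianReal_add_eq_withDensity (m a : ℝ) {v : ℝ≥0} (hv : v ≠ 0) :
    gaussianReal (m + a) v = (gaussianReal m v).withDensity
      fun t => ENNReal.ofReal (exp ((a * (t - m) - a ^ 2 / 2) / v)) := by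
  rw [gaussianReal_of_var_ne_zero _ hv, gaussianReal_of_var_ne_zero _ hv,
    ← withDensity_mul _ (measurable_gaussianPDF _ _) (by fun_prop)]
  congr 1
  ext t
  simp only [Pi.mul_apply, gaussianPDF, ← ENNReal.ofReal_mul (gaussianPDFReal_nonneg m v t)]
  simp only [gaussianPDFReal, mul_assoc, ← exp_add]
  congr 3
  field_simp
  ring

instance {d : ℕ} (m : EuclideanSpace ℝ (Fin d)) (σ : ℝ) :
    IsProbabilityMeasure (gaussianVec m σ) :=
  Measure.isProbabilityMeasure_map (by fun_prop)

theorem gaussianVec_add_eq_withDensity {d : ℕ} (x δ : EuclideanSpace ℝ (Fin d)) {σ : ℝ}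
    (hσ : σ ≠ 0) :
    gaussianVec (x + δ) σ = (gaussianVec x σ).withDensity
      fun z => ENNReal.ofReal (exp ((⟪δ, z - x⟫_ℝ - ‖δ‖ ^ 2 / 2) / σ ^ 2)) := by
  have hv : (σ ^ 2).toNNReal ≠ 0 := by simpa using hσ
  simp only [gaussianVec, PiLp.add_apply, gaussianReal_add_eq_withDensity _ _ hv]
  rw [Measure.pi_withDensity _ fun i => by fun_prop, MeasurableEquiv.map_withDensity]
  congr 1
  ext z
  rw [Function.comp_apply, ← ENNReal.ofReal_prod_of_nonneg fun i _ => (exp_pos _).le,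
    ← exp_sum, ← Finset.sum_div, coe_toNNReal _ (sq_nonneg σ)]
  congr 3
  simp [PiLp.inner_apply, EuclideanSpace.norm_sq_eq, Finset.sum_sub_distrib, Finset.sum_div,
    mul_sub, mul_comm]

theorem neyman_pearson_le_general {d : ℕ} (σ : ℝ) (hσ : 0 < σ)
    (x δ : EuclideanSpace ℝ (Fin d)) (β : ℝ)
    (S : Set (EuclideanSpace ℝ (Fin d)))
    (hS : S = {z | (inner ℝ δ z : ℝ) ≤ β})
    (h : EuclideanSpace ℝ (Fin d) → ℝ) (hmeas : Measurable h)
    (h01 : ∀ z, h z ∈ Set.Icc (0 : ℝ) 1)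
    (hX : ((gaussianVec x σ) S).toReal ≤ ∫ z, h z ∂(gaussianVec x σ)) :
    ((gaussianVec (x + δ) σ) S).toReal ≤ ∫ z, h z ∂(gaussianVec (x + δ) σ) := by
  set r := fun z : EuclideanSpace ℝ (Fin d) => exp ((⟪δ, z - x⟫_ℝ - ‖δ‖ ^ 2 / 2) / σ ^ 2)
  set c := exp ((β - ⟪δ, x⟫_ℝ - ‖δ‖ ^ 2 / 2) / σ ^ 2)
  have hSr : S = {z | r z ≤ c} := by
    ext z
    simp only [hS, mem_ofPred_eq, r, c, exp_le_exp, div_le_div_iff_of_pos_right (pow_pos hσ 2),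
      inner_sub_right]
    constructor <;> intro <;> linarith
  rw [hSr] at hX ⊢
  exact measureReal_sublevel_le_integral_of_likelihoodRatio (by fun_prop) (fun z => (exp_pos _).le)
    (gaussianVec_add_eq_withDensity x δ hσ.ne') (exp_pos _).le hmeas h01 hX

/-- **Neyman–Pearson lemma, part (1) (Lemma 4(1) of Cohen et al.).**
If a randomized rule `h` accepts under `ν_{x,σ}` at least as often as the half-space
`S = {z : ⟨δ, z⟩ ≤ β}`, then it also does so under `ν_{x+δ,σ}`. -/
theorem neyman_pearson_le {d : ℕ} (σ : ℝ) (hσ : 0 < σ)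
    (x δ : EuclideanSpace ℝ (Fin d)) (hδ : δ ≠ 0) (β : ℝ)
    (S : Set (EuclideanSpace ℝ (Fin d)))
    (hS : S = {z | (inner ℝ δ z : ℝ) ≤ β})
    (h : EuclideanSpace ℝ (Fin d) → ℝ) (hmeas : Measurable h)
    (h01 : ∀ z, h z ∈ Set.Icc (0 : ℝ) 1)
    (hX : ((gaussianVec x σ) S).toReal ≤ ∫ z, h z ∂(gaussianVec x σ)) :
    ((gaussianVec (x + δ) σ) S).toReal ≤ ∫ z, h z ∂(gaussianVec (x + δ) σ) :=
  neyman_pearson_le_general σ hσ x δ β S hS h hmeas h01 hX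
end
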